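/- Let x and y be nonzero complex numbers, neither of which is a root of unity, and suppose there exist nonzero integers c and d with x^c = y^d. Then there exist a nonzero complex number λ that is not a root of unity, nonzero integers b and b', and a root of unity ζ such that x = λ^b and y = ζ·λ^{b'}. -/

import Mathlib

/-!
In additive notation, write `c = g c₁`, `d = g d₁` with `c₁, d₁` coprime; then
`ω = c₁ x - d₁ y` is torsion. With `u c₁ + v d₁ = 1`, the element `μ = v x + u y` satisfies
`d₁ μ = x - u ω` and `c₁ μ = y + v ω`, so `l = μ + η`, where `d₁ η = u ω`, works with `b = d₁`
and `b' = c₁`. Such an `η` exists, and is again torsion, because roots of unity in `ℂ` have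
roots of every order.
-/

theorem exists_isCoprime_isOfFinAddOrder_zsmul_sub {M : Type*} [AddCommGroup M] {x y : M}
    {c d : ℤ} (hc : c ≠ 0) (hd : d ≠ 0) (h : c • x = d • y) :
    ∃ c₁ d₁ : ℤ, IsCoprime c₁ d₁ ∧ c₁ ≠ 0 ∧ d₁ ≠ 0 ∧ IsOfFinAddOrder (c₁ • x - d₁ • y) := by
  obtain ⟨g, c₁, d₁, hg, hcop, rfl, rfl⟩ := Int.exists_gcd_one' (Int.gcd_pos_of_ne_zero_left d hc)
  refine ⟨c₁, d₁, Int.isCoprime_iff_gcd_eq_one.mpr hcop, left_ne_zero_of_mul hc,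
    left_ne_zero_of_mul hd, isOfFinAddOrder_iff_zsmul_eq_zero.mpr ⟨g, by positivity, ?_⟩⟩
  linear_combination (norm := module) h

theorem exists_common_base_of_zsmul_eq_zsmul {M : Type*} [AddCommGroup M]
    (hdiv : ∀ t : M, IsOfFinAddOrder t → ∀ n : ℕ, 0 < n → ∃ s, n • s = t)
    {x y : M} {c d : ℤ} (hc : c ≠ 0) (hd : d ≠ 0) (h : c • x = d • y) :
    ∃ (l : M) (b b' : ℤ) (z : M), b ≠ 0 ∧ b' ≠ 0 ∧ IsOfFinAddOrder z ∧
      x = b • l ∧ y = z + b' • l := by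
  obtain ⟨c₁, d₁, ⟨u, v, huv⟩, hc₁, hd₁, hω⟩ := exists_isCoprime_isOfFinAddOrder_zsmul_sub hc hd h
  obtain ⟨s, hs⟩ := hdiv _ hω.zsmul d₁.natAbs (Int.natAbs_pos.mpr hd₁)
  have hη : d₁ • (d₁.sign • s) = u • (c₁ • x - d₁ • y) := by
    rw [smul_smul, Int.mul_sign_self, natCast_zsmul, hs]
  have hs_tors : IsOfFinAddOrder s :=
    (hs ▸ hω.zsmul : IsOfFinAddOrder _).of_nsmul (Int.natAbs_ne_zero.mpr hd₁)
  refine ⟨v • x + u • y + d₁.sign • s, d₁, c₁, -(v • (c₁ • x - d₁ • y) + c₁ • d₁.sign • s),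
    hd₁, hc₁, (hω.zsmul.add hs_tors.zsmul.zsmul).neg, ?_, ?_⟩
  · linear_combination (norm := module) -(huv • x) - hη
  · linear_combination (norm := module) -(huv • y)

theorem IsAlgClosed.exists_units_pow_eq {K : Type*} [Field K] [IsAlgClosed K] (t : Kˣ) {n : ℕ}
    (hn : 0 < n) : ∃ s : Kˣ, s ^ n = t := by
  obtain ⟨z, hz⟩ := IsAlgClosed.exists_pow_nat_eq (t : K) hn
  have hz0 : z ≠ 0 := by rintro rfl; exact t.ne_zero (by rw [← hz, zero_pow hn.ne'])
  exact ⟨Units.mk0 z hz0, Units.ext (by simpa using hz)⟩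

theorem IsAlgClosed.exists_common_base_of_zpow_eq_zpow {K : Type*} [Field K] [IsAlgClosed K]
    {x y : K} (hx : x ≠ 0) (hy : y ≠ 0) (hxt : ¬IsOfFinOrder x) {c d : ℤ} (hc : c ≠ 0)
    (hd : d ≠ 0) (h : x ^ c = y ^ d) :
    ∃ (l : K) (b b' : ℤ) (ζ : K), l ≠ 0 ∧ ¬IsOfFinOrder l ∧ b ≠ 0 ∧ b' ≠ 0 ∧
      IsOfFinOrder ζ ∧ x = l ^ b ∧ y = ζ * l ^ b' := by
  lift x to Kˣ using hx.isUnit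
  lift y to Kˣ using hy.isUnit
  have hu : x ^ c = y ^ d := Units.ext (by simpa using h)
  have h' : c • Additive.ofMul x = d • Additive.ofMul y := by
    rw [← ofMul_zpow, ← ofMul_zpow, hu]
  obtain ⟨l, b, b', z, hb, hb', hz, hxl, hyl⟩ := exists_common_base_of_zsmul_eq_zsmul
    (M := Additive Kˣ) (fun t _ n hn => IsAlgClosed.exists_units_pow_eq t.toMul hn) hc hd h'
  have hxl' : x = l.toMul ^ b := by rw [← toMul_zsmul, ← hxl, toMul_ofMul]
  have hyl' : y = z.toMul * l.toMul ^ b' := by rw [← toMul_zsmul, ← toMul_add, ← hyl, toMul_ofMul]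
  refine ⟨l.toMul, b, b', z.toMul, l.toMul.ne_zero, fun hl => hxt ?_, hb, hb',
    Units.isOfFinOrder_val.mpr hz, by simp [hxl'], by simp [hyl']⟩
  rw [hxl', Units.isOfFinOrder_val]
  exact (Units.isOfFinOrder_val.mp hl).zpow

theorem stmt_6_general (x y : ℂ) (hx : x ≠ 0) (hy : y ≠ 0)
    (hxru : ¬ ∃ k : ℕ, 0 < k ∧ x ^ k = 1)
    (c d : ℤ) (hc : c ≠ 0) (hd : d ≠ 0) (h : x ^ c = y ^ d) :
    ∃ (l : ℂ) (b b' : ℤ) (ζ : ℂ), l ≠ 0 ∧ (¬ ∃ k : ℕ, 0 < k ∧ l ^ k = 1) ∧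
      b ≠ 0 ∧ b' ≠ 0 ∧ (∃ k : ℕ, 0 < k ∧ ζ ^ k = 1) ∧
      x = l ^ b ∧ y = ζ * l ^ b' := by
  simp only [← isOfFinOrder_iff_pow_eq_one] at hxru ⊢
  exact IsAlgClosed.exists_common_base_of_zpow_eq_zpow hx hy hxru hc hd h

/-- multiplicatively dependent nonzero complex numbers, neither a root of
unity, have the form `x = λ^b`, `y = ζ λ^{b'}` for some `λ` not a root of unity, nonzero
integers `b, b'` and a root of unity `ζ`. -/
theorem stmt_6 (x y : ℂ) (hx : x ≠ 0) (hy : y ≠ 0)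
    (hxru : ¬ ∃ k : ℕ, 0 < k ∧ x ^ k = 1)
    (hyru : ¬ ∃ k : ℕ, 0 < k ∧ y ^ k = 1)
    (c d : ℤ) (hc : c ≠ 0) (hd : d ≠ 0) (h : x ^ c = y ^ d) :
    ∃ (l : ℂ) (b b' : ℤ) (ζ : ℂ), l ≠ 0 ∧ (¬ ∃ k : ℕ, 0 < k ∧ l ^ k = 1) ∧
      b ≠ 0 ∧ b' ≠ 0 ∧ (∃ k : ℕ, 0 < k ∧ ζ ^ k = 1) ∧
      x = l ^ b ∧ y = ζ * l ^ b' :=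
  stmt_6_general x y hx hy hxru c d hc hd h
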